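/- Every connected, regular, uniformly dense graph G is 1-tough: for every subset U of vertices whose removal disconnects G, the resulting graph has at most |U| connected components. -/

import Mathlib

/-!
Let `U` leave `c` components and let `A` be the set of edges avoiding `U`. In `(V, A)` every
vertex of `U` is isolated, so `A` has `c + |U|` components and rank `n - c - |U|`; every other
edge meets `U`, so `|A| ≥ m - d|U|`, where `2m = nd`. Uniform density, `|A|/rank(A) ≤ m/(n-1)`,
then clears to `d (n (c - |U| - 1) + 2|U|) ≤ 0`, which for `c ≥ 2` forces `c ≤ |U|`.
-/

open Finset

variable {V : Type*} [Fintype V] [DecidableEq V]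

/-- Number of connected components of the graph `(V, A)` for an edge set `A`. -/
noncomputable def compCount (A : Finset (Sym2 V)) : ℕ :=
  Nat.card (SimpleGraph.fromEdgeSet (↑A : Set (Sym2 V))).ConnectedComponent

/-- The rank of an edge set `A` in the cycle matroid: `|V| - c(A)`. -/
noncomputable def rkE (A : Finset (Sym2 V)) : ℕ := Fintype.card V - compCount A

/-- A graph is uniformly dense if `ρ(A) = |A|/rank(A) ≤ ρ(E)` for all nonempty `A ⊆ E`. -/
def graphUD (G : SimpleGraph V) [Fintype G.edgeSet] : Prop :=
  ∀ A ⊆ G.edgeFinset, A.Nonempty →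
    (A.card : ℝ) / (rkE A : ℝ) ≤ (G.edgeFinset.card : ℝ) / (rkE G.edgeFinset : ℝ)

/-- Number of connected components after deleting the vertex set `U` from `G`. -/
noncomputable def remComp (G : SimpleGraph V) (U : Finset V) : ℕ :=
  Nat.card (G.induce ((↑U : Set V)ᶜ)).ConnectedComponent

namespace SimpleGraph

variable {W : Type*} {H : SimpleGraph W}

theorem IsRegularOfDegree.card_mul_eq_two_mul_card_edgeFinset [Fintype W] {G : SimpleGraph W}
    [DecidableRel G.Adj] [Fintype G.edgeSet] {d : ℕ} (h : G.IsRegularOfDegree d) :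
    Fintype.card W * d = 2 * #G.edgeFinset := by
  have := G.sum_degrees_eq_twice_card_edges
  rw [sum_congr rfl fun v _ => h.degree_eq v, sum_const, card_univ, smul_eq_mul] at this
  convert this

theorem Reachable.apply_eq_of_forall_adj {β : Sort*} {f : W → β}
    (hf : ∀ x y, H.Adj x y → f x = f y) {x y : W} (h : H.Reachable x y) : f x = f y := by
  rw [reachable_iff_reflTransGen] at h
  induction h with
  | refl => rfl
  | tail _ hadj ih => exact ih.trans (hf _ _ hadj)

noncomputable def connectedComponentEquivOfIsolated (s : Set W)
    (hs : ∀ x y, H.Adj x y → x ∈ s) :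
    H.ConnectedComponent ≃ (H.induce s).ConnectedComponent ⊕ ↥sᶜ := by
  classical
  let f : W → (H.induce s).ConnectedComponent ⊕ ↥sᶜ := fun v =>
    if hv : v ∈ s then .inl ((H.induce s).connectedComponentMk ⟨v, hv⟩) else .inr ⟨v, hv⟩
  have hf : ∀ x y, H.Adj x y → f x = f y := fun x y hxy => by
    have hx := hs x y hxy
    have hy := hs y x hxy.symm
    simp only [f, dif_pos hx, dif_pos hy]
    exact congrArg Sum.inl (ConnectedComponent.connectedComponentMk_eq_of_adj hxy)
  refine .ofBijective
    (ConnectedComponent.lift f fun _ _ p _ => p.reachable.apply_eq_of_forall_adj hf)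
    ⟨fun c₁ c₂ => ?_, ?_⟩
  · induction c₁ using ConnectedComponent.ind with | h x => ?_
    induction c₂ using ConnectedComponent.ind with | h y => ?_
    by_cases hx : x ∈ s <;> by_cases hy : y ∈ s <;>
      simp only [ConnectedComponent.lift_mk, f, hx, hy, dif_pos, dif_neg, not_false_eq_true,
        reduceCtorEq, Sum.inl.injEq, Sum.inr.injEq, Subtype.mk.injEq, IsEmpty.forall_iff]
    · intro h
      exact ConnectedComponent.sound
        ((ConnectedComponent.exact h).map (Embedding.induce s).toHom)
    · rintro rfl
      rfl
  · rintro (c | ⟨v, hv⟩)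
    · induction c using ConnectedComponent.ind with | h v => ?_
      exact ⟨H.connectedComponentMk v, by simp [f, v.2]⟩
    · exact ⟨H.connectedComponentMk v, by simp [f, show v ∉ s from hv]⟩

theorem card_connectedComponent_eq_of_isolated [Finite W] (s : Set W)
    (hs : ∀ x y, H.Adj x y → x ∈ s) :
    Nat.card H.ConnectedComponent =
      Nat.card (H.induce s).ConnectedComponent + Nat.card ↥sᶜ := by
  rw [Nat.card_congr (connectedComponentEquivOfIsolated s hs), Nat.card_sum]

end SimpleGraph

open SimpleGraph

theorem compCount_le_card {V : Type*} [Fintype V] (A : Finset (Sym2 V)) :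
    compCount A ≤ Fintype.card V := by
  rw [compCount, ← Nat.card_eq_fintype_card]
  exact Nat.card_le_card_of_surjective _ Quot.mk_surjective

theorem compCount_lt_card {V : Type*} [Fintype V] {A : Finset (Sym2 V)} {e : Sym2 V}
    (he : e ∈ A) (hd : ¬e.IsDiag) :
    compCount A < Fintype.card V := by
  induction e using Sym2.ind with | h x y => ?_
  have hxy : (fromEdgeSet (A : Set (Sym2 V))).Adj x y := ⟨he, hd⟩
  rw [compCount, ← Nat.card_eq_fintype_card]
  by_contra! hle
  exact hxy.ne <| (Quot.mk_surjective.bijective_of_nat_card_le hle).1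
    (ConnectedComponent.connectedComponentMk_eq_of_adj hxy)

theorem rkE_pos_of_subset_edgeFinset {V : Type*} [Fintype V] {G : SimpleGraph V}
    [Fintype G.edgeSet] {A : Finset (Sym2 V)} (hA : A ⊆ G.edgeFinset) (hne : A.Nonempty) :
    0 < rkE A := by
  obtain ⟨e, he⟩ := hne
  exact Nat.sub_pos_of_lt <| compCount_lt_card he <|
    G.not_isDiag_of_mem_edgeSet (mem_edgeFinset.mp (hA he))

theorem rkE_edgeFinset_of_connected {V : Type*} [Fintype V] {G : SimpleGraph V}
    [Fintype G.edgeSet] (hG : G.Connected) :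
    rkE G.edgeFinset = Fintype.card V - 1 := by
  have := hG.nonempty
  have : Nat.card G.ConnectedComponent = 1 :=
    Nat.card_eq_one_iff_unique.mpr
      ⟨hG.preconnected.subsingleton_connectedComponent, inferInstance⟩
  rw [rkE, compCount, coe_edgeFinset, fromEdgeSet_edgeSet, this]

theorem graphUD.card_mul_rkE_le {V : Type*} [Fintype V] {G : SimpleGraph V} [Fintype G.edgeSet]
    (hUD : graphUD G) {A : Finset (Sym2 V)} (hA : A ⊆ G.edgeFinset) :
    #A * rkE G.edgeFinset ≤ #G.edgeFinset * rkE A := by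
  rcases A.eq_empty_or_nonempty with rfl | hne
  · simp
  have hrkA := rkE_pos_of_subset_edgeFinset hA hne
  have hrkE := rkE_pos_of_subset_edgeFinset subset_rfl (hne.mono hA)
  have := hUD A hA hne
  rw [div_le_div_iff₀ (by exact_mod_cast hrkA) (by exact_mod_cast hrkE)] at this
  exact_mod_cast this

namespace SimpleGraph

variable (G : SimpleGraph V) [Fintype G.edgeSet] (U : Finset V)

def edgesAvoiding : Finset (Sym2 V) :=
  G.edgeFinset.filter fun e => ∀ v ∈ e, v ∉ U

theorem edgesAvoiding_subset : G.edgesAvoiding U ⊆ G.edgeFinset :=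
  filter_subset _ _

theorem fromEdgeSet_edgesAvoiding_adj {x y : V} :
    (fromEdgeSet (G.edgesAvoiding U : Set (Sym2 V))).Adj x y ↔
      G.Adj x y ∧ x ∉ U ∧ y ∉ U := by
  simp only [fromEdgeSet_adj, edgesAvoiding, coe_filter, Set.mem_ofPred_eq, mem_edgeFinset,
    mem_edgeSet, Sym2.mem_iff, forall_eq_or_imp, forall_eq]
  exact ⟨fun h => ⟨h.1.1, h.1.2⟩, fun h => ⟨⟨h.1, h.2⟩, h.1.ne⟩⟩

theorem compCount_edgesAvoiding : compCount (G.edgesAvoiding U) = remComp G U + #U := by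
  have hisolated : ∀ x y, (fromEdgeSet (G.edgesAvoiding U : Set (Sym2 V))).Adj x y →
      x ∈ ((U : Set V)ᶜ) := fun x y h => ((G.fromEdgeSet_edgesAvoiding_adj U).mp h).2.1
  have hinduce : (fromEdgeSet (G.edgesAvoiding U : Set (Sym2 V))).induce (U : Set V)ᶜ =
      G.induce (U : Set V)ᶜ := by
    ext ⟨x, hx⟩ ⟨y, hy⟩
    simp only [comap_adj, Function.Embedding.subtype_apply, fromEdgeSet_edgesAvoiding_adj]
    exact and_iff_left ⟨hx, hy⟩
  rw [compCount, card_connectedComponent_eq_of_isolated _ hisolated, hinduce, compl_compl,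
    Nat.card_coe_set_eq, Set.ncard_coe_finset, remComp]

theorem card_edgeFinset_le_card_edgesAvoiding_add [DecidableRel G.Adj] :
    #G.edgeFinset ≤ #(G.edgesAvoiding U) + ∑ v ∈ U, G.degree v := by
  have hinc : G.edgeFinset.filter (fun e => ¬∀ v ∈ e, v ∉ U) ⊆
      U.biUnion fun v => G.incidenceFinset v := by
    intro e he
    simp only [mem_filter, mem_edgeFinset, not_forall, not_not] at he
    obtain ⟨he, v, hv, hvU⟩ := he
    exact mem_biUnion.mpr ⟨v, hvU, (mem_incidenceFinset _ _ _).mpr ⟨he, hv⟩⟩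
  calc #G.edgeFinset
      = #(G.edgesAvoiding U) + #(G.edgeFinset.filter fun e => ¬∀ v ∈ e, v ∉ U) :=
        (card_filter_add_card_filter_not _).symm
    _ ≤ #(G.edgesAvoiding U) + ∑ v ∈ U, #(G.incidenceFinset v) := by
        gcongr
        exact (card_le_card hinc).trans card_biUnion_le
    _ = #(G.edgesAvoiding U) + ∑ v ∈ U, G.degree v := by
        simp only [card_incidenceFinset_eq_degree]

end SimpleGraph

/-- A connected, regular, uniformly dense graph is `1`-tough: whenever removing a vertex set
`U` disconnects the graph, at most `|U|` components remain. -/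
theorem connected_regular_uniformlyDense_one_tough (G : SimpleGraph V) [Fintype G.edgeSet]
    [DecidableRel G.Adj] (hconn : G.Connected) (d : ℕ) (hreg : G.IsRegularOfDegree d)
    (hUD : graphUD G) :
    ∀ U : Finset V, 2 ≤ remComp G U → remComp G U ≤ U.card := by
  intro U hc
  have hdensity := hUD.card_mul_rkE_le (G.edgesAvoiding_subset U)
  rw [rkE_edgeFinset_of_connected hconn, rkE, G.compCount_edgesAvoiding U] at hdensity
  have hcard : remComp G U + #U ≤ Fintype.card V :=
    G.compCount_edgesAvoiding U ▸ compCount_le_card _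
  have hedges := G.card_edgeFinset_le_card_edgesAvoiding_add U
  rw [sum_congr rfl fun v _ => hreg.degree_eq v, sum_const, smul_eq_mul] at hedges
  have hhandshake := hreg.card_mul_eq_two_mul_card_edgeFinset
  have : Nontrivial V := Fintype.one_lt_card_iff_nontrivial.mp (by omega)
  obtain ⟨v⟩ := hconn.nonempty
  have hd : 0 < d := hreg.degree_eq v ▸ hconn.preconnected.degree_pos_of_nontrivial v
  generalize Fintype.card V = n, remComp G U = c, #U = u, #G.edgeFinset = m,
    #(G.edgesAvoiding U) = a at *
  zify [show 1 ≤ n by omega, hcard] at hdensity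
  zify at hc hcard hedges hhandshake hd ⊢
  by_contra! hcu
  have hdeficit : (m : ℤ) * (c + u - 1) ≤ u * d * (n - 1) := by nlinarith
  have hdouble : (d : ℤ) * (n * (c - u - 1) + 2 * u) ≤ 0 := by nlinarith
  have hpos : 0 < (n : ℤ) * (c - u - 1) + 2 * u := by nlinarith
  nlinarith
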